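/- arXiv:2108.05546 — 2 statements merged into one kernel-verified Lean document; each statement's English description precedes it below -/
import Mathlib

section
/- Let S be a finite species set, let C be a finite set of complexes with C ⊆ ℝ^S, and let R ⊆ C × C be a finite reaction set with (y, y) ∉ R for all y. Suppose R is reversible, i.e., (y, y') ∈ R implies (y', y) ∈ R. If {R_1, …, R_k} is an independent decomposition of R, then each R_i is reversible: for every (y, y') ∈ R_i, also (y', y) ∈ R_i. -/
/-- A decomposition of the reaction set `R`: a collection of nonempty pairwise disjoint
subsets of `R` whose union is `R`. -/
def IsDecompositionOf {α : Type*} [DecidableEq α] (R : Finset (α × α))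
    (D : Finset (Finset (α × α))) : Prop :=
  (∀ E ∈ D, E.Nonempty) ∧ (D : Set (Finset (α × α))).PairwiseDisjoint id ∧ D.sup id = R

/-- The stoichiometric subspace of a set `E` of reactions: the span of the reaction
vectors `y' - y` for `(y, y') ∈ E`. -/
def stoichSubspace {S : Type*} [Fintype S] (E : Finset ((S → ℝ) × (S → ℝ))) :
    Submodule ℝ (S → ℝ) :=
  Submodule.span ℝ ((fun p : (S → ℝ) × (S → ℝ) => p.2 - p.1) '' (E : Set _))

/-- A decomposition is independent if the stoichiometric subspace of `R` is the internal
direct sum of the stoichiometric subspaces of the blocks. -/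
def IsIndependentDecomposition {S : Type*} [Fintype S] [DecidableEq (S → ℝ)]
    (R : Finset ((S → ℝ) × (S → ℝ))) (D : Finset (Finset ((S → ℝ) × (S → ℝ)))) : Prop :=
  IsDecompositionOf R D ∧
    iSupIndep (fun E : {E // E ∈ D} => stoichSubspace (E : Finset ((S → ℝ) × (S → ℝ)))) ∧
    (⨆ E : {E // E ∈ D}, stoichSubspace (E : Finset ((S → ℝ) × (S → ℝ)))) = stoichSubspace R

/-- If a reaction network is reversible, then every block of an independent decomposition
of its reaction set is reversible. -/
theorem reversible_of_independentDecomposition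
    {S : Type*} [Fintype S] [DecidableEq (S → ℝ)]
    (C : Finset (S → ℝ)) (R : Finset ((S → ℝ) × (S → ℝ)))
    (hRC : ∀ p ∈ R, p.1 ∈ C ∧ p.2 ∈ C)
    (hloop : ∀ y : S → ℝ, (y, y) ∉ R)
    (hrev : ∀ p ∈ R, (p.2, p.1) ∈ R)
    (D : Finset (Finset ((S → ℝ) × (S → ℝ))))
    (hD : IsIndependentDecomposition R D) :
    ∀ E ∈ D, ∀ p ∈ E, (p.2, p.1) ∈ E := by
  obtain ⟨⟨hne, hdisj, hsup⟩, hindep, _⟩ := hD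
  intro E hE p hp
  -- p ∈ R
  have hER : E ≤ R := hsup ▸ Finset.le_sup (f := id) hE
  have hpR : p ∈ R := hER hp
  have hq : (p.2, p.1) ∈ R := hrev p hpR
  -- find block containing the reverse reaction
  have : (p.2, p.1) ∈ D.sup id := hsup ▸ hq
  obtain ⟨E', hE', hq'⟩ := Finset.mem_sup.mp this
  by_cases hEE : E' = E
  · exact hEE ▸ hq'
  · exfalso
    have hv : p.2 - p.1 ∈ stoichSubspace E :=
      Submodule.subset_span ⟨p, hp, rfl⟩
    have hv' : p.1 - p.2 ∈ stoichSubspace E' :=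
      Submodule.subset_span ⟨(p.2, p.1), hq', rfl⟩
    have hv'2 : p.2 - p.1 ∈ stoichSubspace E' := by
      have := (stoichSubspace E').neg_mem hv'
      simpa using this
    have hle : stoichSubspace E' ≤
        ⨆ j, ⨆ (_ : j ≠ (⟨E, hE⟩ : {E // E ∈ D})),
          stoichSubspace (j : Finset ((S → ℝ) × (S → ℝ))) :=
      le_iSup₂ (f := fun (j : {E // E ∈ D}) (_ : j ≠ (⟨E, hE⟩ : {E // E ∈ D})) =>
        stoichSubspace (j : Finset ((S → ℝ) × (S → ℝ))))
        (⟨E', hE'⟩ : {E // E ∈ D}) (by simp [Subtype.ext_iff, hEE])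
    have hdisj2 : Disjoint (stoichSubspace E) (stoichSubspace E') :=
      (hindep (⟨E, hE⟩ : {E // E ∈ D})).mono_right hle
    have hzero : p.2 - p.1 = 0 :=
      (Submodule.disjoint_def.mp hdisj2) _ hv hv'2
    have heq : p.2 = p.1 := sub_eq_zero.mp hzero
    have hpR' : (p.1, p.2) ∈ R := by rwa [Prod.mk.eta]
    rw [heq] at hpR'
    exact hloop p.1 hpR'
end

section
/- Let S be a finite species set, let C ⊆ ℝ^S be a finite set of complexes, and let R ⊆ C × C be a finite reaction set with (y, y) ∉ R for all y. Suppose R is weakly reversible and suppose that for every decomposition {R_1, …, R_k} of R the deficiency is additive: δ(R) = δ(R_1) + … + δ(R_k). Then every independent decomposition of R is weakly reversible, i.e., for every independent decomposition {R_1, …, R_k} of R, each R_i is a weakly reversible subset of reactions. -/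
/-- A set `E` of reactions is weakly reversible if for every reaction `(y, y') ∈ E`, the
complex `y` is reachable from `y'` under the reflexive-transitive closure of the relation
"there is a reaction in `E` from `a` to `b`". -/
def WeaklyReversible {α : Type*} (E : Finset (α × α)) : Prop :=
  ∀ p ∈ E, Relation.ReflTransGen (fun a b => (a, b) ∈ E) p.2 p.1

/-- The complexes occurring as a source or target of some reaction in `E`. -/
def complexesOf {α : Type*} [DecidableEq α] (E : Finset (α × α)) : Finset α :=
  E.image Prod.fst ∪ E.image Prod.snd

/-- The undirected graph on the complexes occurring in `E`, with an edge between `y` and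
`y'` whenever `(y, y') ∈ E` or `(y', y) ∈ E`. -/
def linkageGraph {α : Type*} [DecidableEq α] (E : Finset (α × α)) :
    SimpleGraph {x // x ∈ complexesOf E} where
  Adj a b := a ≠ b ∧ (((a : α), (b : α)) ∈ E ∨ ((b : α), (a : α)) ∈ E)
  symm := ⟨by rintro a b ⟨hne, h⟩; exact ⟨hne.symm, h.symm⟩⟩
  loopless := ⟨by rintro a ⟨hne, -⟩; exact hne rfl⟩

/-- The deficiency `δ(E) = n(E) - l(E) - s(E)` of a set `E` of reactions, where `n(E)` is
the number of complexes occurring in `E`, `l(E)` is the number of connected components of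
the linkage graph of `E`, and `s(E)` is the dimension of the stoichiometric subspace. -/
noncomputable def deficiency {S : Type*} [Fintype S] [DecidableEq (S → ℝ)]
    (E : Finset ((S → ℝ) × (S → ℝ))) : ℤ :=
  ((complexesOf E).card : ℤ) - (Nat.card (linkageGraph E).ConnectedComponent : ℤ) -
    (Module.finrank ℝ (stoichSubspace E) : ℤ)

/-!
Deficiency is nonnegative and a single reaction has deficiency at most zero, so additivity over
the decomposition of `R` into singletons, with or without a block `E` merged, forces
`δ(E) = 0`. A reaction `(y, y')` of `E` closes a cycle in `R` by weak reversibility, which gives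
a vanishing nonnegative combination of reaction vectors, positive on `(y, y')`; independence
makes its `E`-part vanish as well. At deficiency zero this relation lifts to the incidence
vectors of the linkage graph, i.e. it is a circulation on `E`, and a circulation that is
positive on `(y, y')` contains a directed path from `y'` back to `y`.
-/

lemma Submodule.eq_zero_of_finrank_le_finrank_map {K V V₂ : Type*} [DivisionRing K]
    [AddCommGroup V] [Module K V] [AddCommGroup V₂] [Module K V₂] {f : V →ₗ[K] V₂}
    {W : Submodule K V} [FiniteDimensional K W]
    (hW : Module.finrank K W ≤ Module.finrank K (W.map f)) {w : V} (hw : w ∈ W)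
    (hfw : f w = 0) : w = 0 := by
  have hrank := LinearMap.finrank_range_add_finrank_ker (f.domRestrict W)
  rw [LinearMap.range_domRestrict] at hrank
  have hker : LinearMap.ker (f.domRestrict W) = ⊥ :=
    Submodule.finrank_eq_zero.mp (by omega)
  have : (⟨w, hw⟩ : W) ∈ LinearMap.ker (f.domRestrict W) := hfw
  rw [hker, Submodule.mem_bot] at this
  exact congrArg Subtype.val this

section Decomposition

variable {α : Type*} [DecidableEq α]

lemma IsDecompositionOf.sum_sum {β : Type*} [AddCommMonoid β] {R : Finset (α × α)}
    {D : Finset (Finset (α × α))} (hD : IsDecompositionOf R D) (f : α × α → β) :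
    ∑ E ∈ D, ∑ e ∈ E, f e = ∑ e ∈ R, f e := by
  rw [← hD.2.2, Finset.sup_eq_biUnion, Finset.sum_biUnion hD.2.1]
  rfl

lemma isDecompositionOf_image_singleton (R : Finset (α × α)) :
    IsDecompositionOf R (R.image singleton) := by
  refine ⟨?_, ?_, ?_⟩
  · rintro _ hF
    obtain ⟨a, -, rfl⟩ := Finset.mem_image.mp hF
    exact Finset.singleton_nonempty a
  · simp only [Finset.coe_image]
    rintro _ ⟨a, -, rfl⟩ _ ⟨b, -, rfl⟩ hab
    exact Finset.disjoint_singleton.mpr (ne_of_apply_ne singleton hab)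
  · ext; simp

lemma isDecompositionOf_insert_image_singleton_sdiff {R E : Finset (α × α)} (hER : E ⊆ R)
    (hE : E.Nonempty) : IsDecompositionOf R (insert E ((R \ E).image singleton)) := by
  obtain ⟨hne, hdisj, hsup⟩ := isDecompositionOf_image_singleton (R \ E)
  refine ⟨?_, ?_, ?_⟩
  · simpa [hE] using hne
  · rw [Finset.coe_insert]
    refine hdisj.insert fun F hF _ => ?_
    obtain ⟨a, ha, rfl⟩ := Finset.mem_image.mp hF
    exact Finset.disjoint_singleton_right.mpr (Finset.mem_sdiff.mp ha).2
  · rw [Finset.sup_insert, hsup]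
    exact Finset.union_sdiff_of_subset hER

lemma eq_sum_singleton_of_additive {β : Type*} [AddCommGroup β] {f : Finset (α × α) → β}
    {R E : Finset (α × α)} (hf : ∀ D, IsDecompositionOf R D → f R = ∑ F ∈ D, f F)
    (hER : E ⊆ R) (hE : E.Nonempty) : f E = ∑ e ∈ E, f {e} := by
  have hsingle := hf _ (isDecompositionOf_image_singleton R)
  have hblock := hf _ (isDecompositionOf_insert_image_singleton_sdiff hER hE)
  have hE_notMem : E ∉ (R \ E).image singleton := by
    simp only [Finset.mem_image, not_exists, not_and]
    rintro a ha rfl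
    exact (Finset.mem_sdiff.mp ha).2 (Finset.mem_singleton_self a)
  rw [Finset.sum_image Finset.singleton_injective.injOn, ← Finset.sum_sdiff hER] at hsingle
  rw [Finset.sum_insert hE_notMem, Finset.sum_image Finset.singleton_injective.injOn,
    hsingle, add_comm] at hblock
  exact (add_right_cancel hblock).symm

end Decomposition

section Incidence

variable {α : Type*} [DecidableEq α] {E : Finset (α × α)} {e : α × α}

lemma fst_mem_complexesOf (he : e ∈ E) : e.1 ∈ complexesOf E :=
  Finset.mem_union_left _ (Finset.mem_image_of_mem _ he)

lemma snd_mem_complexesOf (he : e ∈ E) : e.2 ∈ complexesOf E :=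
  Finset.mem_union_right _ (Finset.mem_image_of_mem _ he)

lemma linkageGraph_reachable (he : e ∈ E) :
    (linkageGraph E).Reachable ⟨e.1, fst_mem_complexesOf he⟩ ⟨e.2, snd_mem_complexesOf he⟩ := by
  by_cases h : e.1 = e.2
  · have : (⟨e.1, fst_mem_complexesOf he⟩ : complexesOf E) = ⟨e.2, snd_mem_complexesOf he⟩ :=
      Subtype.ext h
    exact this ▸ SimpleGraph.Reachable.refl _
  · exact SimpleGraph.Adj.reachable ⟨fun h' => h (congrArg Subtype.val h'), Or.inl he⟩

variable (E) in
noncomputable def incidence (e : α × α) : complexesOf E → ℝ :=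
  fun v => (if (v : α) = e.2 then 1 else 0) - (if (v : α) = e.1 then 1 else 0)

lemma linearCombination_incidence {M : Type*} [AddCommGroup M] [Module ℝ M]
    (w : complexesOf E → M) (he : e ∈ E) :
    Fintype.linearCombination ℝ w (incidence E e) =
      w ⟨e.2, snd_mem_complexesOf he⟩ - w ⟨e.1, fst_mem_complexesOf he⟩ := by
  have hsingle : incidence E e =
      Pi.single ⟨e.2, snd_mem_complexesOf he⟩ 1 - Pi.single ⟨e.1, fst_mem_complexesOf he⟩ 1 := by
    funext v
    simp [incidence, Pi.single_apply, Subtype.ext_iff]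
  simp [hsingle]

variable (E) in
noncomputable def incidenceSpan : Submodule ℝ (complexesOf E → ℝ) :=
  Submodule.span ℝ (incidence E '' E)

variable (E) in
/-- The incidence vectors of a component sum to zero over that component, and the
summation maps onto the functions on the components. -/
lemma finrank_incidenceSpan_add_card_connectedComponent_le :
    Module.finrank ℝ (incidenceSpan E) + Nat.card (linkageGraph E).ConnectedComponent ≤
      (complexesOf E).card := by
  classical
  set G := linkageGraph E
  set q := Fintype.linearCombination ℝ fun v : complexesOf E =>
    (Pi.single (G.connectedComponentMk v) 1 : G.ConnectedComponent → ℝ)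
  have hrange : LinearMap.range q = ⊤ := by
    rw [Fintype.range_linearCombination, ← (Pi.basisFun ℝ G.ConnectedComponent).span_eq]
    congr 1
    exact Quot.mk_surjective.range_comp (Pi.basisFun ℝ G.ConnectedComponent)
  have hker : incidenceSpan E ≤ LinearMap.ker q := by
    rw [incidenceSpan, Submodule.span_le]
    rintro _ ⟨e, he, rfl⟩
    rw [SetLike.mem_coe, LinearMap.mem_ker, linearCombination_incidence _ he, sub_eq_zero,
      SimpleGraph.ConnectedComponent.sound (linkageGraph_reachable he)]
  have hrank := LinearMap.finrank_range_add_finrank_ker q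
  rw [hrange, finrank_top, Module.finrank_pi, Module.finrank_pi, Fintype.card_coe] at hrank
  rw [Nat.card_eq_fintype_card]
  have := Submodule.finrank_mono hker
  omega

/-- The cut argument: the net flow of a circulation into the set of complexes from which
`e.1` is reachable is zero, and no edge leaves that set, so no edge with positive flow
enters it either. -/
lemma reflTransGen_of_sum_smul_incidence_eq_zero {c : α × α → ℝ} (hc : ∀ e ∈ E, 0 ≤ c e)
    (hcirc : ∑ e ∈ E, c e • incidence E e = 0) (he : e ∈ E) (hce : 0 < c e) :
    Relation.ReflTransGen (fun a b => (a, b) ∈ E) e.2 e.1 := by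
  classical
  set P : α → Prop := fun v => Relation.ReflTransGen (fun a b => (a, b) ∈ E) v e.1
  set g : α → ℝ := fun v => if P v then 1 else 0
  have hflow : ∑ e' ∈ E, c e' * (g e'.2 - g e'.1) = 0 := by
    have := congrArg (Fintype.linearCombination ℝ fun v : complexesOf E => g v) hcirc
    rw [map_sum, map_zero] at this
    rw [← this]
    refine Finset.sum_congr rfl fun e' he' => ?_
    rw [map_smul, linearCombination_incidence _ he', smul_eq_mul]
  have hterm : ∀ e' ∈ E, c e' * (g e'.2 - g e'.1) ≤ 0 := by
    intro e' he'
    refine mul_nonpos_of_nonneg_of_nonpos (hc e' he') ?_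
    have : P e'.2 → P e'.1 := Relation.ReflTransGen.head he'
    simp only [g]
    split_ifs <;> simp_all
  have hzero := (Finset.sum_eq_zero_iff_of_nonpos hterm).mp hflow e he
  have hP1 : P e.1 := Relation.ReflTransGen.refl
  by_contra hP2
  change ¬ P e.2 at hP2
  simp [g, hP1, hP2, hce.ne'] at hzero

end Incidence

lemma sum_smul_sub_mem_stoichSubspace {S : Type*} [Fintype S] (E : Finset ((S → ℝ) × (S → ℝ)))
    (c : (S → ℝ) × (S → ℝ) → ℝ) : ∑ e ∈ E, c e • (e.2 - e.1) ∈ stoichSubspace E :=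
  Submodule.sum_mem _ fun e he => Submodule.smul_mem _ _ (Submodule.subset_span ⟨e, he, rfl⟩)

section Deficiency

variable {S : Type*} [Fintype S] [DecidableEq (S → ℝ)]

lemma map_incidenceSpan (E : Finset ((S → ℝ) × (S → ℝ))) :
    (incidenceSpan E).map (Fintype.linearCombination ℝ Subtype.val) = stoichSubspace E := by
  rw [incidenceSpan, Submodule.map_span, ← Set.image_comp, stoichSubspace]
  exact congrArg _ (Set.image_congr fun e he => linearCombination_incidence _ he)

lemma finrank_stoichSubspace_le_finrank_incidenceSpan (E : Finset ((S → ℝ) × (S → ℝ))) :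
    Module.finrank ℝ (stoichSubspace E) ≤ Module.finrank ℝ (incidenceSpan E) :=
  map_incidenceSpan E ▸ Submodule.finrank_map_le _ _

lemma deficiency_nonneg (E : Finset ((S → ℝ) × (S → ℝ))) : 0 ≤ deficiency E := by
  have := finrank_incidenceSpan_add_card_connectedComponent_le E
  have := finrank_stoichSubspace_le_finrank_incidenceSpan E
  unfold deficiency
  omega

lemma deficiency_singleton_nonpos {e : (S → ℝ) × (S → ℝ)} (he : e.1 ≠ e.2) :
    deficiency {e} ≤ 0 := by
  have hn : (complexesOf {e}).card ≤ 2 := by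
    rw [complexesOf, Finset.image_singleton, Finset.image_singleton]
    exact Finset.card_le_two
  have hl : 0 < Nat.card (linkageGraph {e}).ConnectedComponent :=
    have : Nonempty (complexesOf {e}) := ⟨e.1, fst_mem_complexesOf (Finset.mem_singleton_self e)⟩
    Nat.card_pos
  have hs : Module.finrank ℝ (stoichSubspace {e}) = 1 := by
    rw [stoichSubspace, Finset.coe_singleton, Set.image_singleton]
    exact finrank_span_singleton (sub_ne_zero.mpr he.symm)
  unfold deficiency
  omega

/-- `δ(E) = 0` says `dim (incidenceSpan E) ≤ n - l = s`, so the map onto the stoichiometric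
subspace is injective on `incidenceSpan E`. -/
lemma sum_smul_incidence_eq_zero_of_deficiency_eq_zero {E : Finset ((S → ℝ) × (S → ℝ))}
    (hE : deficiency E = 0) {c : (S → ℝ) × (S → ℝ) → ℝ}
    (hc : ∑ e ∈ E, c e • (e.2 - e.1) = 0) : ∑ e ∈ E, c e • incidence E e = 0 := by
  have hfinrank : Module.finrank ℝ (incidenceSpan E) ≤
      Module.finrank ℝ ((incidenceSpan E).map (Fintype.linearCombination ℝ Subtype.val)) := by
    have := finrank_incidenceSpan_add_card_connectedComponent_le E
    rw [map_incidenceSpan]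
    unfold deficiency at hE
    omega
  refine Submodule.eq_zero_of_finrank_le_finrank_map hfinrank
    (Submodule.sum_mem _ fun e he => Submodule.smul_mem _ _ (Submodule.subset_span ⟨e, he, rfl⟩))
    ?_
  rw [map_sum, ← hc]
  exact Finset.sum_congr rfl fun e he => by rw [map_smul, linearCombination_incidence _ he]

end Deficiency

section Paths

variable {M : Type*} [AddCommGroup M] [Module ℝ M] {R : Finset (M × M)}

lemma exists_nonneg_sum_smul_eq_sub_of_reflTransGen {a b : M}
    (h : Relation.ReflTransGen (fun u v => (u, v) ∈ R) a b) :
    ∃ c : M × M → ℝ, (∀ e, 0 ≤ c e) ∧ ∑ e ∈ R, c e • (e.2 - e.1) = b - a := by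
  classical
  induction h with
  | refl => exact ⟨0, fun _ => le_rfl, by simp⟩
  | @tail u v _ huv ih =>
    obtain ⟨c, hc0, hc⟩ := ih
    refine ⟨c + Pi.single (u, v) 1, fun e => add_nonneg (hc0 e) ?_, ?_⟩
    · rw [Pi.single_apply]; positivity
    · simp [add_smul, Finset.sum_add_distrib, Pi.single_apply, ite_smul, hc, huv]

lemma exists_nonneg_sum_smul_eq_zero_of_reflTransGen {p : M × M} (hp : p ∈ R)
    (h : Relation.ReflTransGen (fun u v => (u, v) ∈ R) p.2 p.1) :
    ∃ c : M × M → ℝ, (∀ e, 0 ≤ c e) ∧ 0 < c p ∧ ∑ e ∈ R, c e • (e.2 - e.1) = 0 := by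
  classical
  obtain ⟨c, hc0, hc⟩ := exists_nonneg_sum_smul_eq_sub_of_reflTransGen h
  refine ⟨c + Pi.single p 1, fun e => add_nonneg (hc0 e) ?_, ?_, ?_⟩
  · rw [Pi.single_apply]; positivity
  · simpa using add_pos_of_nonneg_of_pos (hc0 p) one_pos
  · simp [add_smul, Finset.sum_add_distrib, Pi.single_apply, ite_smul, hc, hp]

end Paths

theorem independentDecomposition_weaklyReversible_of_deficiency_additive_general
    {S : Type*} [Fintype S] [DecidableEq (S → ℝ)]
    (R : Finset ((S → ℝ) × (S → ℝ)))
    (hloop : ∀ y : S → ℝ, (y, y) ∉ R)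
    (hWR : WeaklyReversible R)
    (hdef : ∀ D : Finset (Finset ((S → ℝ) × (S → ℝ))), IsDecompositionOf R D →
      deficiency R = ∑ E ∈ D, deficiency E) :
    ∀ D : Finset (Finset ((S → ℝ) × (S → ℝ))), IsIndependentDecomposition R D →
      ∀ E ∈ D, WeaklyReversible E := by
  rintro D ⟨hD, hindep, -⟩ E hED p hp
  have hER : E ⊆ R := hD.2.2 ▸ Finset.le_sup (f := id) hED
  have hdefE : deficiency E = 0 := by
    refine le_antisymm ?_ (deficiency_nonneg E)
    rw [eq_sum_singleton_of_additive hdef hER (hD.1 E hED)]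
    exact Finset.sum_nonpos fun ⟨y, y'⟩ he =>
      deficiency_singleton_nonpos fun h : y = y' => hloop y (by subst h; exact hER he)
  obtain ⟨c, hc0, hcp, hc⟩ :=
    exists_nonneg_sum_smul_eq_zero_of_reflTransGen (hER hp) (hWR p (hER hp))
  have hblock : ∑ e ∈ E, c e • (e.2 - e.1) = 0 := by
    refine (iSupIndep_iff_finsetSum_eq_zero_imp_eq_zero _).mp hindep Finset.univ
      (fun F => ∑ e ∈ (F : Finset _), c e • (e.2 - e.1))
      (fun F _ => sum_smul_sub_mem_stoichSubspace F.1 c) ?_ ⟨E, hED⟩ (Finset.mem_univ _)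
    rw [Finset.sum_coe_sort D fun F => ∑ e ∈ F, c e • (e.2 - e.1), hD.sum_sum, hc]
  exact reflTransGen_of_sum_smul_incidence_eq_zero (fun e _ => hc0 e)
    (sum_smul_incidence_eq_zero_of_deficiency_eq_zero hdefE hblock) hp hcp

/-- If `R` is weakly reversible and the deficiency is additive over every decomposition of
`R`, then every independent decomposition of `R` is weakly reversible. -/
theorem independentDecomposition_weaklyReversible_of_deficiency_additive
    {S : Type*} [Fintype S] [DecidableEq (S → ℝ)]
    (C : Finset (S → ℝ)) (R : Finset ((S → ℝ) × (S → ℝ)))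
    (hRC : ∀ p ∈ R, p.1 ∈ C ∧ p.2 ∈ C)
    (hloop : ∀ y : S → ℝ, (y, y) ∉ R)
    (hWR : WeaklyReversible R)
    (hdef : ∀ D : Finset (Finset ((S → ℝ) × (S → ℝ))), IsDecompositionOf R D →
      deficiency R = ∑ E ∈ D, deficiency E) :
    ∀ D : Finset (Finset ((S → ℝ) × (S → ℝ))), IsIndependentDecomposition R D →
      ∀ E ∈ D, WeaklyReversible E :=
  independentDecomposition_weaklyReversible_of_deficiency_additive_general R hloop hWR hdef
end
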